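/- arXiv:1806.10791 — 2 statements merged into one kernel-verified Lean document; each statement's English description precedes it below -/
import Mathlib

section
/- The longest element w₀^Σ of the finite parabolic subgroup W_Σ centralises W̃: for every w ∈ W̃ one has w₀^Σ w = w w₀^Σ. -/
/-!
Relative Coxeter groups: common definitions.

`(W, S)` is a Coxeter system (Mathlib's `CoxeterSystem M W`), `ℓ = cs.length`.
For `w : W`, `invSet cs w` is the set `T(w)` of left inversions of `w`, and
`descSet cs w = T(w) ∩ S` is `D(w)`.  For a subset `Sg ⊆ S` (playing the role of `Σ`),
`par Sg` is the standard parabolic subgroup `W_Σ`, `parRefl Sg` its set of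
reflections `T_Σ`, `minRight cs Sg = W^Σ`, `minLeft cs Sg = ^ΣW`,
`relN cs Sg Sg' = N(Σ, Σ')`, `IsLongest cs Sg w` says `w` is a longest element of `W_Σ`,
`longest cs Sg` is the longest element `w₀^Σ`, `relW cs Sg = W̃`,
`complSet cs Sg = Σ^∁`, `tilde cs Sg s = s̃ = w₀^{Σ∪{s}} w₀^Σ`, `relS cs Sg = S̃`,
`relLength cs Sg = ℓ̃ : W → ℕ∞`, and `GoodSubset cs Sg` records the standing
hypotheses (1) and (2) on `Σ`.
-/

namespace RelativeCoxeter

variable {B W : Type*} [Group W] {M : CoxeterMatrix B}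

/-- The set `S` of simple reflections of the Coxeter system. -/
def simpleSet (cs : CoxeterSystem M W) : Set W := Set.range cs.simple

/-- `T(w)`: the set of left inversions of `w`, i.e. reflections `t` with `ℓ(tw) < ℓ(w)`. -/
def invSet (cs : CoxeterSystem M W) (w : W) : Set W :=
  {t | cs.IsReflection t ∧ cs.length (t * w) < cs.length w}

/-- `D(w) = T(w) ∩ S`. -/
def descSet (cs : CoxeterSystem M W) (w : W) : Set W :=
  invSet cs w ∩ simpleSet cs

/-- The standard parabolic subgroup `W_Σ` generated by `Σ`. -/
def par (Sg : Set W) : Subgroup W := Subgroup.closure Sg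

/-- `T_Σ`: the set of reflections of the Coxeter system `(W_Σ, Σ)`. -/
def parRefl (Sg : Set W) : Set W :=
  {t | ∃ u ∈ par Sg, ∃ s ∈ Sg, t = u * s * u⁻¹}

/-- `W^Σ = {w : T(w⁻¹) ∩ T_Σ = ∅}`, minimal-length representatives of `W/W_Σ`. -/
def minRight (cs : CoxeterSystem M W) (Sg : Set W) : Set W :=
  {w | invSet cs w⁻¹ ∩ parRefl Sg = ∅}

/-- `^ΣW = {w : T(w) ∩ T_Σ = ∅}`, minimal-length representatives of `W_Σ\W`. -/
def minLeft (cs : CoxeterSystem M W) (Sg : Set W) : Set W :=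
  {w | invSet cs w ∩ parRefl Sg = ∅}

/-- `N(Σ, Σ') = {y ∈ W^Σ ∩ ^{Σ'}W : y W_Σ y⁻¹ = W_{Σ'}}`. -/
def relN (cs : CoxeterSystem M W) (Sg Sg' : Set W) : Set W :=
  {y | y ∈ minRight cs Sg ∧ y ∈ minLeft cs Sg' ∧
    (fun u => y * u * y⁻¹) '' (par Sg : Set W) = (par Sg' : Set W)}

/-- `w` is a longest element of `W_Σ`. -/
def IsLongest (cs : CoxeterSystem M W) (Sg : Set W) (w : W) : Prop :=
  w ∈ par Sg ∧ ∀ u ∈ par Sg, cs.length u ≤ cs.length w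

/-- The longest element `w₀^Σ` of `W_Σ` (defined when it exists; junk value `1` otherwise). -/
noncomputable def longest (cs : CoxeterSystem M W) (Sg : Set W) : W :=
  letI := Classical.propDecidable (∃ w, IsLongest cs Sg w)
  if h : ∃ w, IsLongest cs Sg w then h.choose else 1

/-- `W̃ = {w : w W_Σ w⁻¹ = W_Σ and T(w) ∩ T_Σ = ∅}`. -/
def relW (cs : CoxeterSystem M W) (Sg : Set W) : Set W :=
  {w | (fun u => w * u * w⁻¹) '' (par Sg : Set W) = (par Sg : Set W) ∧
    invSet cs w ∩ parRefl Sg = ∅}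

/-- `Σ^∁ = {s ∈ S ∖ Σ : W_{Σ∪{s}} is finite}`. -/
def complSet (cs : CoxeterSystem M W) (Sg : Set W) : Set W :=
  {s ∈ simpleSet cs \ Sg | ((par (Sg ∪ {s}) : Set W)).Finite}

/-- `s̃ = w₀^{Σ∪{s}} w₀^Σ`. -/
noncomputable def tilde (cs : CoxeterSystem M W) (Sg : Set W) (s : W) : W :=
  longest cs (Sg ∪ {s}) * longest cs Sg

/-- `S̃ = {s̃ : s ∈ Σ^∁}`. -/
noncomputable def relS (cs : CoxeterSystem M W) (Sg : Set W) : Set W :=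
  {w | ∃ s ∈ complSet cs Sg, w = tilde cs Sg s}

/-- `ℓ̃(w) ∈ ℕ ∪ {∞}`: the minimal `q` such that `w = w₁ ⋯ w_q` with all `w_i ∈ S̃`. -/
noncomputable def relLength (cs : CoxeterSystem M W) (Sg : Set W) (w : W) : ℕ∞ :=
  sInf {q : ℕ∞ | ∃ l : List W, (∀ x ∈ l, x ∈ relS cs Sg) ∧ l.prod = w ∧
    (l.length : ℕ∞) = q}

/-- The standing hypotheses on `Σ`: `Σ ⊆ S`, `W_Σ` is finite, and for every `Σ'` with
`Σ ⊆ Σ' ⊆ S` and `W_{Σ'}` finite, the longest element `w₀^{Σ'}` normalises `W_Σ`. -/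
def GoodSubset (cs : CoxeterSystem M W) (Sg : Set W) : Prop :=
  Sg ⊆ simpleSet cs ∧ ((par Sg : Set W)).Finite ∧
  ∀ Sg' : Set W, Sg ⊆ Sg' → Sg' ⊆ simpleSet cs → ((par Sg' : Set W)).Finite →
    ∀ w0 : W, IsLongest cs Sg' w0 →
      (fun u => w0 * u * w0⁻¹) '' (par Sg : Set W) = (par Sg : Set W)

variable (cs : CoxeterSystem M W)

/-!
If `w ∈ W̃`, conjugation by `w` maps `W_Σ` onto itself without increasing length:
`ℓ(w x w⁻¹) + ℓ(w) = ℓ(w x) ≤ ℓ(w) + ℓ(x)`, since `ℓ(u w) = ℓ(u) + ℓ(w)` for `u ∈ W_Σ` as soon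
as `T(w) ∩ T_Σ = ∅`. So the preimage of `w₀^Σ` under this conjugation is again a longest
element of `W_Σ`, hence equal to `w₀^Σ`: a longest element is determined by its inversion set,
which is `T_Σ`.

Both facts come from the inversion-set rule `T(v w) = T(v) ∆ v T(w) v⁻¹`. It is proved with the
parity `invParity cs w t` of the number of occurrences of `t` in the left inversion sequence of
a word for `w`; this parity does not depend on the word because it is read off the permutation
representation of `W` on `W × ZMod 2` in which `s` acts by `(x, ε) ↦ (s x s, ε + [x = s])`
(Björner–Brenti, Theorem 1.4.3).
-/

open CoxeterSystem

theorem wordProd_alternatingWord_add_two_mul (i j : B) (n : ℕ) :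
    cs.wordProd (alternatingWord j i (n + 2 * M i j)) = cs.wordProd (alternatingWord j i n) := by
  have hdiv : (n + 2 * M i j) / 2 = n / 2 + M i j := by omega
  have heven : Even (n + 2 * M i j) ↔ Even n := by simp [Nat.even_add]
  rw [cs.prod_alternatingWord_eq_mul_pow, cs.prod_alternatingWord_eq_mul_pow, hdiv,
    pow_add, cs.simple_mul_simple_pow', mul_one]
  simp only [heven]

theorem simple_mul_mul_simple_eq_simple_iff (i : B) (x : W) :
    cs.simple i * x * cs.simple i = cs.simple i ↔ x = cs.simple i := by
  constructor <;> intro h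
  · simpa [mul_assoc] using congrArg (fun y => cs.simple i * y * cs.simple i) h
  · simp [h]

section InversionParity

variable [DecidableEq W]

def parityPerm (i : B) : Equiv.Perm (W × ZMod 2) :=
  Function.Involutive.toPerm
    (fun p => (cs.simple i * p.1 * cs.simple i, p.2 + if p.1 = cs.simple i then 1 else 0))
    (by
      rintro ⟨x, ε⟩
      ext
      · simp [mul_assoc]
      · simp only [simple_mul_mul_simple_eq_simple_iff]
        split_ifs <;> decide +revert)

theorem parityPerm_apply (i : B) (p : W × ZMod 2) :
    parityPerm cs i p =
      (cs.simple i * p.1 * cs.simple i, p.2 + if p.1 = cs.simple i then 1 else 0) :=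
  rfl

theorem prod_map_parityPerm_apply (ω : List B) (p : W × ZMod 2) :
    (ω.map (parityPerm cs)).prod p =
      (cs.wordProd ω * p.1 * (cs.wordProd ω)⁻¹,
        p.2 + (cs.leftInvSeq ω).count (cs.wordProd ω * p.1 * (cs.wordProd ω)⁻¹)) := by
  induction ω generalizing p with
  | nil => simp
  | cons i ω ih =>
    set y := cs.wordProd ω * p.1 * (cs.wordProd ω)⁻¹
    have hy : cs.wordProd (i :: ω) * p.1 * (cs.wordProd (i :: ω))⁻¹ =
        MulAut.conj (cs.simple i) y := by
      simp only [y, cs.wordProd_cons, MulAut.conj_apply]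
      group
    have hcount : (cs.leftInvSeq (i :: ω)).count (MulAut.conj (cs.simple i) y)
        = (cs.leftInvSeq ω).count y + if y = cs.simple i then 1 else 0 := by
      have hfix : cs.simple i = MulAut.conj (cs.simple i) y ↔ y = cs.simple i := by
        rw [eq_comm, MulAut.conj_apply, cs.inv_simple, simple_mul_mul_simple_eq_simple_iff]
      rw [leftInvSeq, List.count_cons, List.count_map_of_injective _ _ (MulAut.conj _).injective]
      simp only [beq_iff_eq, hfix]
    rw [List.map_cons, List.prod_cons, Equiv.Perm.mul_apply, ih, parityPerm_apply, hy, hcount]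
    ext
    · simp only [MulAut.conj_apply, cs.inv_simple]; rfl
    · push_cast
      ring

theorem even_count_leftInvSeq_alternatingWord (i j : B) (t : W) :
    Even ((cs.leftInvSeq (alternatingWord i j (2 * M i j))).count t) := by
  set L := cs.leftInvSeq (alternatingWord i j (2 * M i j))
  have hlen : L.length = 2 * M i j := by simp [L]
  have hperiod : L.drop (M i j) = L.take (M i j) := by
    apply List.ext_getElem (by simp [hlen]; omega)
    intro k hk₁ hk₂
    simp only [List.length_drop, List.length_take, hlen] at hk₁ hk₂
    simp only [L, List.getElem_drop, List.getElem_take]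
    rw [cs.getElem_leftInvSeq_alternatingWord, cs.getElem_leftInvSeq_alternatingWord,
      show 2 * (M i j + k) + 1 = 2 * k + 1 + 2 * M i j by ring,
      wordProd_alternatingWord_add_two_mul]
    all_goals omega
  rw [← List.take_append_drop (M i j) L, List.count_append, hperiod]
  exact ⟨_, rfl⟩

theorem parityPerm_mul_pow (i j : B) (m : ℕ) :
    (parityPerm cs i * parityPerm cs j) ^ m =
      ((alternatingWord i j (2 * m)).map (parityPerm cs)).prod := by
  induction m with
  | zero => simp [alternatingWord]
  | succ m ih =>
    rw [show 2 * (m + 1) = 2 * m + 1 + 1 by ring, alternatingWord_succ', alternatingWord_succ',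
      if_neg (Nat.not_even_bit1 m), if_pos (even_two_mul m), pow_succ', ih]
    simp [mul_assoc]

theorem isLiftable_parityPerm : M.IsLiftable (parityPerm cs) := by
  intro i j
  have hone : cs.wordProd (alternatingWord i j (2 * M i j)) = 1 := by
    rw [cs.prod_alternatingWord_eq_mul_pow, if_pos (even_two_mul _),
      Nat.mul_div_cancel_left _ two_pos, one_mul, cs.simple_mul_simple_pow]
  ext p : 1
  rw [parityPerm_mul_pow, prod_map_parityPerm_apply, hone,
    (even_count_leftInvSeq_alternatingWord cs i j _).natCast_zmod_two]
  simp

noncomputable def parityRep : W →* Equiv.Perm (W × ZMod 2) :=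
  cs.lift ⟨parityPerm cs, isLiftable_parityPerm cs⟩

theorem parityRep_wordProd (ω : List B) :
    parityRep cs (cs.wordProd ω) = (ω.map (parityPerm cs)).prod := by
  rw [wordProd, map_list_prod, List.map_map]
  congr 2
  ext i : 1
  exact cs.lift_apply_simple (isLiftable_parityPerm cs) i

noncomputable def invParity (w t : W) : ZMod 2 :=
  (parityRep cs w (w⁻¹ * t * w, 0)).2

theorem invParity_wordProd (ω : List B) (t : W) :
    invParity cs (cs.wordProd ω) t = (cs.leftInvSeq ω).count t := by
  simp [invParity, parityRep_wordProd, prod_map_parityPerm_apply, mul_assoc]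

theorem parityRep_apply (w : W) (p : W × ZMod 2) :
    parityRep cs w p = (w * p.1 * w⁻¹, p.2 + invParity cs w (w * p.1 * w⁻¹)) := by
  obtain ⟨ω, rfl⟩ := cs.wordProd_surjective w
  rw [invParity_wordProd, parityRep_wordProd, prod_map_parityPerm_apply]

theorem invParity_mul (v w t : W) :
    invParity cs (v * w) t = invParity cs v t + invParity cs w (v⁻¹ * t * v) := by
  have hw : w * ((v * w)⁻¹ * t * (v * w)) * w⁻¹ = v⁻¹ * t * v := by group
  have hv : v * (v⁻¹ * t * v) * v⁻¹ = t := by group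
  rw [invParity, map_mul, Equiv.Perm.mul_apply, parityRep_apply cs w, hw, parityRep_apply cs v, hv]
  simp only [zero_add]
  ring

theorem invParity_one (t : W) : invParity cs 1 t = 0 := by
  simp [invParity]

theorem invParity_self {t : W} (ht : cs.IsReflection t) : invParity cs t t = 1 := by
  obtain ⟨u, i, rfl⟩ := ht
  have hsimple : invParity cs (cs.simple i) (cs.simple i) = 1 := by
    simpa using invParity_wordProd cs [i] (cs.simple i)
  have hcancel := invParity_mul cs u u⁻¹ (u * cs.simple i * u⁻¹)
  rw [mul_inv_cancel, invParity_one] at hcancel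
  have h₁ : u⁻¹ * (u * cs.simple i * u⁻¹) * u = cs.simple i := by group
  have h₂ :
      (u * cs.simple i)⁻¹ * (u * cs.simple i * u⁻¹) * (u * cs.simple i) = cs.simple i := by
    simp [mul_assoc]
  rw [h₁] at hcancel
  rw [invParity_mul, invParity_mul, h₁, h₂]
  linear_combination hsimple - hcancel

theorem mem_invSet_of_invParity_eq_one {w t : W} (h : invParity cs w t = 1) :
    t ∈ invSet cs w := by
  obtain ⟨ω, hω, rfl⟩ := cs.exists_isReduced w
  rw [invParity_wordProd] at h
  have hcount : 0 < (cs.leftInvSeq ω).count t := by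
    by_contra h0
    simp [Nat.eq_zero_of_not_pos h0] at h
  exact cs.isLeftInversion_of_mem_leftInvSeq hω (List.count_pos_iff.mp hcount)

theorem mem_invSet_iff_invParity_eq_one {w t : W} (ht : cs.IsReflection t) :
    t ∈ invSet cs w ↔ invParity cs w t = 1 := by
  refine ⟨fun hlt => ?_, mem_invSet_of_invParity_eq_one cs⟩
  have hnot : invParity cs (t * w) t ≠ 1 := by
    intro h
    have := (mem_invSet_of_invParity_eq_one cs h).2
    rw [← mul_assoc, ht.mul_self, one_mul] at this
    exact absurd hlt.2 this.not_gt
  have hw : w = t * (t * w) := by rw [← mul_assoc, ht.mul_self, one_mul]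
  rw [hw, invParity_mul, invParity_self cs ht, ht.inv, ht.mul_self, one_mul]
  revert hnot
  generalize invParity cs (t * w) t = a
  decide +revert

end InversionParity

theorem invSet_mul (v w : W) :
    invSet cs (v * w) = symmDiff (invSet cs v) ((fun t => v⁻¹ * t * v) ⁻¹' invSet cs w) := by
  classical
  ext t
  by_cases ht : cs.IsReflection t
  · have ht' : cs.IsReflection (v⁻¹ * t * v) := by simpa using ht.conj v⁻¹
    rw [Set.mem_symmDiff, Set.mem_preimage, mem_invSet_iff_invParity_eq_one cs ht,
      mem_invSet_iff_invParity_eq_one cs ht, mem_invSet_iff_invParity_eq_one cs ht',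
      invParity_mul]
    generalize invParity cs v t = a
    generalize invParity cs w (v⁻¹ * t * v) = b
    decide +revert
  · have h₁ : t ∉ invSet cs (v * w) := fun h => ht h.1
    have h₂ : t ∉ invSet cs v := fun h => ht h.1
    have h₃ : v⁻¹ * t * v ∉ invSet cs w := fun h =>
      ht (by simpa [mul_assoc] using h.1.conj v)
    simp [Set.mem_symmDiff, h₁, h₂, h₃]

theorem notMem_invSet_mul {v w t : W} (hv : t ∉ invSet cs v)
    (hw : v⁻¹ * t * v ∉ invSet cs w) : t ∉ invSet cs (v * w) := by
  rw [invSet_mul, Set.mem_symmDiff, Set.mem_preimage]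
  tauto

theorem invSet_one : invSet cs 1 = ∅ := by
  ext t
  simp [invSet]

theorem invSet_simple (i : B) : invSet cs (cs.simple i) = {cs.simple i} := by
  ext t
  constructor
  · rintro ⟨-, hlt⟩
    rw [cs.length_simple, Nat.lt_one_iff, cs.length_eq_zero_iff, mul_eq_one_iff_eq_inv,
      cs.inv_simple] at hlt
    exact hlt
  · rintro rfl
    exact ⟨cs.isReflection_simple i, by simp⟩

theorem eq_one_of_invSet_eq_empty {w : W} (h : invSet cs w = ∅) : w = 1 := by
  by_contra hw
  obtain ⟨i, hi⟩ := cs.exists_leftDescent_of_ne_one hw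
  exact (Set.eq_empty_iff_forall_notMem.mp h) _ ⟨cs.isReflection_simple i, hi⟩

theorem eq_of_invSet_eq {u v : W} (h : invSet cs u = invSet cs v) : u = v := by
  have : invSet cs (v⁻¹ * u) = ∅ := by
    rw [invSet_mul, h, ← invSet_mul, inv_mul_cancel, invSet_one]
  exact (inv_mul_eq_one.mp (eq_one_of_invSet_eq_empty cs this)).symm

section Parabolic

variable {Sg : Set W}

theorem mem_parRefl_of_mem {s : W} (hs : s ∈ Sg) : s ∈ parRefl Sg :=
  ⟨1, one_mem _, s, hs, by simp⟩

theorem parRefl_subset_par : parRefl Sg ⊆ par Sg := by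
  rintro _ ⟨u, hu, s, hs, rfl⟩
  exact mul_mem (mul_mem hu (Subgroup.subset_closure hs)) (inv_mem hu)

theorem conj_mem_parRefl {a t : W} (ha : a ∈ par Sg) (ht : t ∈ parRefl Sg) :
    a * t * a⁻¹ ∈ parRefl Sg := by
  obtain ⟨u, hu, s, hs, rfl⟩ := ht
  exact ⟨a * u, mul_mem ha hu, s, hs, by group⟩

theorem isReflection_of_mem_parRefl (hS : Sg ⊆ simpleSet cs) {t : W} (ht : t ∈ parRefl Sg) :
    cs.IsReflection t := by
  obtain ⟨u, -, s, hs, rfl⟩ := ht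
  obtain ⟨i, rfl⟩ := hS hs
  exact ⟨u, i, rfl⟩

theorem invSet_subset_parRefl (hS : Sg ⊆ simpleSet cs) {u : W} (hu : u ∈ par Sg) :
    invSet cs u ⊆ parRefl Sg := by
  have step :
      ∀ x ∈ Sg, ∀ y, invSet cs y ⊆ parRefl Sg → invSet cs (x * y) ⊆ parRefl Sg := by
    intro x hx y hy t ht
    obtain ⟨i, rfl⟩ := hS hx
    rcases Set.symmDiff_subset_union (invSet_mul cs _ y ▸ ht) with ht | ht
    · rw [invSet_simple, Set.mem_singleton_iff] at ht
      exact ht ▸ mem_parRefl_of_mem hx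
    · simpa [mul_assoc] using conj_mem_parRefl (Subgroup.subset_closure hx) (hy ht)
  induction hu using Subgroup.closure_induction_left with
  | one => simp [invSet_one]
  | mul_left x hx y _ ih => exact step x hx y ih
  | inv_mul_cancel x hx y _ ih =>
    obtain ⟨i, rfl⟩ := hS hx
    rw [cs.inv_simple]
    exact step _ hx y ih

theorem length_mul_of_mem_minLeft (hS : Sg ⊆ simpleSet cs) {w : W} (hw : w ∈ minLeft cs Sg)
    {u : W} (hu : u ∈ par Sg) : cs.length (u * w) = cs.length u + cs.length w := by
  induction hn : cs.length u generalizing u with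
  | zero => rw [cs.length_eq_zero_iff.mp hn, one_mul, zero_add]
  | succ n ih =>
    have hu1 : u ≠ 1 := by
      rintro rfl
      rw [cs.length_one] at hn
      omega
    obtain ⟨i, hi⟩ := cs.exists_leftDescent_of_ne_one hu1
    have hi_refl : cs.simple i ∈ parRefl Sg :=
      invSet_subset_parRefl cs hS hu ⟨cs.isReflection_simple i, hi⟩
    have hu' : cs.simple i * u ∈ par Sg := mul_mem (parRefl_subset_par hi_refl) hu
    have hu'_len : cs.length (cs.simple i * u) = n := by
      have hlt : cs.length (cs.simple i * u) < cs.length u := hi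
      rcases cs.length_simple_mul u i with h | h <;> omega
    have h₁ : cs.simple i ∉ invSet cs (cs.simple i * u) := by
      rintro ⟨-, hlt⟩
      rw [cs.simple_mul_simple_cancel_left] at hlt
      omega
    have h₂ : (cs.simple i * u)⁻¹ * cs.simple i * (cs.simple i * u) ∉ invSet cs w := by
      intro hmem
      have := conj_mem_parRefl (inv_mem hu') hi_refl
      rw [inv_inv] at this
      exact (Set.eq_empty_iff_forall_notMem.mp hw) _ ⟨hmem, this⟩
    have hnot := notMem_invSet_mul cs h₁ h₂
    have e : cs.simple i * (cs.simple i * u * w) = u * w := by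
      rw [mul_assoc, cs.simple_mul_simple_cancel_left]
    have ih' := ih hu' hu'_len
    rcases cs.length_simple_mul (cs.simple i * u * w) i with h | h
    · rw [e] at h
      omega
    · exact absurd ⟨cs.isReflection_simple i, by rw [e] at h ⊢; omega⟩ hnot

theorem length_conj_le (hS : Sg ⊆ simpleSet cs) {w : W} (hw : w ∈ minLeft cs Sg) {x : W}
    (hwx : w * x * w⁻¹ ∈ par Sg) :
    cs.length (w * x * w⁻¹) ≤ cs.length x := by
  have h := length_mul_of_mem_minLeft cs hS hw hwx
  rw [inv_mul_cancel_right] at h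
  have := cs.length_mul_le w x
  omega

theorem invSet_eq_parRefl_of_isLongest (hS : Sg ⊆ simpleSet cs) {u : W}
    (hu : IsLongest cs Sg u) : invSet cs u = parRefl Sg := by
  refine (invSet_subset_parRefl cs hS hu.1).antisymm fun t ht => ?_
  have hrefl := isReflection_of_mem_parRefl cs hS ht
  exact ⟨hrefl, (hu.2 _ (mul_mem (parRefl_subset_par ht) hu.1)).lt_of_ne
    (hrefl.length_mul_right_ne u)⟩

theorem IsLongest.unique (hS : Sg ⊆ simpleSet cs) {u v : W} (hu : IsLongest cs Sg u)
    (hv : IsLongest cs Sg v) : u = v :=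
  eq_of_invSet_eq cs <| by
    rw [invSet_eq_parRefl_of_isLongest cs hS hu, invSet_eq_parRefl_of_isLongest cs hS hv]

end Parabolic

/-- the longest element `w₀^Σ` of `W_Σ` centralises `W̃`. -/
theorem longest_centralises_relW (Sg : Set W) (hSg : GoodSubset cs Sg)
    (w0 : W) (hw0 : IsLongest cs Sg w0) :
    ∀ w ∈ relW cs Sg, w0 * w = w * w0 := by
  rintro w ⟨hconj, hmin⟩
  have hw0_image : w0 ∈ (fun u => w * u * w⁻¹) '' (par Sg : Set W) := by
    rw [hconj]
    exact hw0.1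
  obtain ⟨x, hx, hxw0 : w * x * w⁻¹ = w0⟩ := hw0_image
  have hx_longest : IsLongest cs Sg x := ⟨hx, fun u hu =>
    (hw0.2 u hu).trans (hxw0 ▸ length_conj_le cs hSg.1 hmin (hxw0 ▸ hw0.1))⟩
  obtain rfl := hx_longest.unique cs hSg.1 hw0
  conv_lhs => rw [← hxw0]
  group

end RelativeCoxeter
end

section
/- For any subsets Σ, Σ', Σ'' ⊆ S, the multiplication of W restricts to a map N(Σ', Σ'') × N(Σ, Σ') → N(Σ, Σ''); that is, if y ∈ N(Σ, Σ') and y' ∈ N(Σ', Σ''), then y' y ∈ N(Σ, Σ''). -/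
/-!
Relative Coxeter groups: common definitions.

`(W, S)` is a Coxeter system (Mathlib's `CoxeterSystem M W`), `ℓ = cs.length`.
For `w : W`, `invSet cs w` is the set `T(w)` of left inversions of `w`, and
`descSet cs w = T(w) ∩ S` is `D(w)`.  For a subset `Sg ⊆ S` (playing the role of `Σ`),
`par Sg` is the standard parabolic subgroup `W_Σ`, `parRefl Sg` its set of
reflections `T_Σ`, `minRight cs Sg = W^Σ`, `minLeft cs Sg = ^ΣW`,
`relN cs Sg Sg' = N(Σ, Σ')`, `IsLongest cs Sg w` says `w` is a longest element of `W_Σ`,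
`longest cs Sg` is the longest element `w₀^Σ`, `relW cs Sg = W̃`,
`complSet cs Sg = Σ^∁`, `tilde cs Sg s = s̃ = w₀^{Σ∪{s}} w₀^Σ`, `relS cs Sg = S̃`,
`relLength cs Sg = ℓ̃ : W → ℕ∞`, and `GoodSubset cs Sg` records the standing
hypotheses (1) and (2) on `Σ`.
-/

namespace RelativeCoxeter

variable {B W : Type*} [Group W] {M : CoxeterMatrix B}

variable (cs : CoxeterSystem M W)

/-!
For a reflection `t`, the sign cocycle below shows that `t ∈ T(uv)` exactly when one of
`t ∈ T(u)`, `u⁻¹ t u ∈ T(v)` holds. So if `t ∈ T(y'y) ∩ T_{Σ''}`, then `t ∉ T(y')` forces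
`y'⁻¹ t y' ∈ T(y)`; this reflection lies in `y'⁻¹ W_{Σ''} y' = W_{Σ'}`, hence in `T_{Σ'}`,
contradicting `y ∈ ^{Σ'}W`. Applied to `(y'y)⁻¹ = y⁻¹ y'⁻¹` the same argument gives `y'y ∈ W^Σ`,
and the conjugation conditions compose.

The cocycle: `W` acts on the right on `W × {±1}`, with `s_i` acting by conjugation and flipping
the sign exactly at `s_i`. The braid relations hold because the left inversion sequence of the
braid relator is periodic with period `M i i'`. The sign acquired by `(t, 1)` under `w = π ω` is
the parity of the occurrences of `t` in the left inversion sequence of `ω`; for `ω` reduced this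
is `-1` iff `t ∈ T(w)`. Applied to a word in `Σ'` for a reflection of `W_{Σ'}`, it also shows that
such a reflection lies in `T_{Σ'}`.
-/

open CoxeterSystem List MulOpposite
open scoped Classical

local prefix:100 "s " => cs.simple
local prefix:100 "π " => cs.wordProd
local prefix:100 "ℓ " => cs.length
local prefix:100 "lis " => cs.leftInvSeq

theorem prod_map_alternatingWord_two_mul {G : Type*} [Monoid G] (f : B → G) (i i' : B) (m : ℕ) :
    (map f (alternatingWord i i' (2 * m))).prod = (f i * f i') ^ m := by
  induction m with
  | zero => simp [alternatingWord]
  | succ m ih =>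
    rw [show 2 * (m + 1) = 2 * m + 1 + 1 by ring, alternatingWord_succ', alternatingWord_succ',
      if_neg (by simp), if_pos (even_two_mul m), map_cons, map_cons,
      prod_cons, prod_cons, ih, pow_succ', mul_assoc]

theorem wordProd_alternatingWord_odd_periodic (i i' : B) (k : ℕ) :
    π alternatingWord i' i (2 * (k + M i i') + 1) = π alternatingWord i' i (2 * k + 1) := by
  rw [prod_alternatingWord_eq_mul_pow, prod_alternatingWord_eq_mul_pow,
    show (2 * (k + M i i') + 1) / 2 = k + M i i' by omega, show (2 * k + 1) / 2 = k by omega,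
    pow_add, simple_mul_simple_pow', mul_one]
  simp

theorem even_count_leftInvSeq_braid (i i' : B) (t : W) :
    Even ((lis alternatingWord i i' (2 * M i i')).count t) := by
  set L := lis alternatingWord i i' (2 * M i i')
  have hL : L.length = 2 * M i i' := by simp [L]
  have hperiodic : L.drop (M i i') = L.take (M i i') := by
    refine ext_getElem (by simp only [length_drop, length_take, hL]; omega) fun k h₁ h₂ => ?_
    simp only [getElem_drop, getElem_take, L]
    rw [getElem_leftInvSeq_alternatingWord, getElem_leftInvSeq_alternatingWord,
      add_comm (M i i') k, wordProd_alternatingWord_odd_periodic]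
    all_goals simp only [length_drop, length_take, hL] at h₁ h₂; omega
  rw [← take_append_drop (M i i') L, count_append, hperiodic]
  exact ⟨_, rfl⟩

theorem wordProd_alternatingWord_two_mul (i i' : B) (m : ℕ) :
    π alternatingWord i i' (2 * m) = (s i * s i') ^ m :=
  prod_map_alternatingWord_two_mul cs.simple i i' m

noncomputable def signedConj (i : B) : Equiv.Perm (W × ℤˣ) :=
  Function.Involutive.toPerm (fun x => (s i * x.1 * s i, if x.1 = s i then -x.2 else x.2)) <| by
    rintro ⟨t, ε⟩
    have hconj : s i * t * s i = s i ↔ t = s i := by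
      constructor
      · intro h
        simpa [mul_assoc] using congrArg (fun x => s i * x * s i) h
      · rintro rfl
        simp
    by_cases ht : t = s i
    · subst ht
      simp
    · simp only [hconj, ht, if_false]
      simp [mul_assoc]

theorem signedConj_apply (i : B) (t : W) (ε : ℤˣ) :
    signedConj cs i (t, ε) = (s i * t * s i, if t = s i then -ε else ε) := rfl

theorem prod_map_signedConj_apply (ω : List B) (t : W) (ε : ℤˣ) :
    (map (op ∘ signedConj cs) ω).prod.unop (t, ε) =
      ((π ω)⁻¹ * t * π ω, (-1) ^ (lis ω).count t * ε) := by
  induction ω generalizing t ε with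
  | nil => simp
  | cons i ω ih =>
    have hcount : (lis ω).count (s i * t * s i) = (map (MulAut.conj (s i)) (lis ω)).count t := by
      rw [← count_map_of_injective _ _ (MulAut.conj (s i)).injective]
      simp [mul_assoc]
    simp only [map_cons, prod_cons, unop_mul, Equiv.Perm.mul_apply, Function.comp_apply, unop_op]
    rw [signedConj_apply, ih, hcount]
    simp only [leftInvSeq, wordProd_cons, mul_inv_rev, inv_simple, count_cons, beq_iff_eq]
    by_cases ht : t = s i
    · subst ht; simp [pow_succ, mul_assoc]
    · simp [ht, Ne.symm ht, mul_assoc]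

theorem isLiftable_signedConj : M.IsLiftable (op ∘ signedConj cs) := by
  intro i i'
  rw [← prod_map_alternatingWord_two_mul]
  apply unop_injective
  ext1 ⟨t, ε⟩
  rw [prod_map_signedConj_apply, (even_count_leftInvSeq_braid cs i i' t).neg_one_pow,
    wordProd_alternatingWord_two_mul, simple_mul_simple_pow]
  simp

-- A right action (hence `ᵐᵒᵖ`), so that the sign records left inversions, as in `invSet`.
noncomputable def signedConjRep : W →* (Equiv.Perm (W × ℤˣ))ᵐᵒᵖ :=
  cs.lift ⟨op ∘ signedConj cs, isLiftable_signedConj cs⟩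

noncomputable def invSign (w t : W) : ℤˣ := ((signedConjRep cs w).unop (t, 1)).2

theorem signedConjRep_wordProd (ω : List B) :
    signedConjRep cs (π ω) = (map (op ∘ signedConj cs) ω).prod := by
  rw [wordProd, map_list_prod, map_map]
  congr 1
  exact map_congr_left fun i _ => lift_apply_simple cs _ i

theorem invSign_wordProd (ω : List B) (t : W) : invSign cs (π ω) t = (-1) ^ (lis ω).count t := by
  simp [invSign, signedConjRep_wordProd, prod_map_signedConj_apply]

theorem signedConjRep_apply (w t : W) (ε : ℤˣ) :
    (signedConjRep cs w).unop (t, ε) = (w⁻¹ * t * w, invSign cs w t * ε) := by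
  obtain ⟨ω, rfl⟩ := cs.wordProd_surjective w
  rw [signedConjRep_wordProd, prod_map_signedConj_apply, invSign_wordProd]

theorem invSign_one (t : W) : invSign cs 1 t = 1 := by
  simp [invSign]

theorem invSign_mul (u v t : W) :
    invSign cs (u * v) t = invSign cs u t * invSign cs v (u⁻¹ * t * u) := by
  rw [invSign, map_mul, unop_mul, Equiv.Perm.mul_apply, signedConjRep_apply cs u,
    signedConjRep_apply, mul_one]
  exact mul_comm _ _

theorem invSign_simple (i : B) : invSign cs (s i) (s i) = -1 := by
  simpa using invSign_wordProd cs [i] (s i)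

theorem invSign_isReflection_self {t : W} (ht : cs.IsReflection t) : invSign cs t t = -1 := by
  obtain ⟨u, i, rfl⟩ := ht
  have hconj : u⁻¹ * (u * s i * u⁻¹) * u = s i := by group
  have hsplit := invSign_mul cs u (s i * u⁻¹) (u * s i * u⁻¹)
  rw [← mul_assoc, hconj] at hsplit
  have hsimple := invSign_mul cs (s i) u⁻¹ (s i)
  rw [inv_mul_cancel, one_mul, invSign_simple] at hsimple
  have hcancel := invSign_mul cs u u⁻¹ (u * s i * u⁻¹)
  rw [mul_inv_cancel, invSign_one, hconj] at hcancel
  rw [hsplit, hsimple, neg_one_mul, mul_neg, ← hcancel]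

theorem mem_leftInvSeq_of_invSign_wordProd {ω : List B} {t : W}
    (h : invSign cs (π ω) t = -1) : t ∈ lis ω := by
  rw [invSign_wordProd] at h
  refine count_pos_iff.mp (Nat.pos_of_ne_zero fun h0 => ?_)
  simp [h0] at h

theorem mem_invSet_of_invSign {w t : W} (h : invSign cs w t = -1) : t ∈ invSet cs w := by
  obtain ⟨ω, hω, rfl⟩ := cs.exists_isReduced w
  exact cs.isLeftInversion_of_mem_leftInvSeq hω (mem_leftInvSeq_of_invSign_wordProd cs h)

theorem mem_invSet_iff_invSign {w t : W} (ht : cs.IsReflection t) :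
    t ∈ invSet cs w ↔ invSign cs w t = -1 := by
  refine ⟨fun hinv => ?_, mem_invSet_of_invSign cs⟩
  -- Otherwise the sign of `t` at `t * w` would be `-1`, making `t * w` longer than `w`.
  by_contra hne
  have hone : invSign cs w t = 1 := (Int.units_eq_one_or _).resolve_right hne
  have hlt : ℓ (t * (t * w)) < ℓ (t * w) := (mem_invSet_of_invSign cs (by
    rw [invSign_mul, invSign_isReflection_self cs ht, inv_mul_cancel, one_mul, hone, mul_one])).2
  rw [← mul_assoc, ht.mul_self, one_mul] at hlt
  exact lt_asymm hinv.2 hlt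

theorem inv_mul_mul_mem_invSet {u v t : W} (ht : t ∈ invSet cs (u * v)) (htu : t ∉ invSet cs u) :
    u⁻¹ * t * u ∈ invSet cs v := by
  have hrefl : cs.IsReflection t := ht.1
  rw [mem_invSet_iff_invSign cs hrefl, invSign_mul] at ht
  rw [mem_invSet_iff_invSign cs hrefl] at htu
  rw [mem_invSet_iff_invSign cs (by simpa using hrefl.conj u⁻¹)]
  rwa [(Int.units_eq_one_or _).resolve_right htu, one_mul] at ht

theorem parRefl_subset_par_s13 (C : Set W) : parRefl C ⊆ par C := by
  rintro _ ⟨u, hu, c, hc, rfl⟩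
  exact mul_mem (mul_mem hu (Subgroup.subset_closure hc)) (inv_mem hu)

theorem wordProd_mem_par {C : Set W} {ω : List B} (hω : ∀ i ∈ ω, s i ∈ C) : π ω ∈ par C :=
  (par C).list_prod_mem fun _ hx => by
    obtain ⟨i, hi, rfl⟩ := mem_map.mp hx
    exact Subgroup.subset_closure (hω i hi)

theorem exists_wordProd_eq_of_mem_par {C : Set W} (hC : C ⊆ simpleSet cs) {w : W}
    (hw : w ∈ par C) : ∃ ω : List B, (∀ i ∈ ω, s i ∈ C) ∧ π ω = w := by
  have hinv : C⁻¹ = C := by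
    rw [← Set.image_inv_eq_inv]
    refine (Set.image_congr fun x hx => ?_).trans (Set.image_id' C)
    obtain ⟨i, rfl⟩ := hC hx
    exact inv_simple cs i
  rw [par, ← Subgroup.mem_toSubmonoid, Subgroup.closure_toSubmonoid, hinv, Set.union_self] at hw
  obtain ⟨l, hlC, rfl⟩ := Submonoid.exists_list_of_mem_closure hw
  obtain ⟨ω, rfl⟩ : l ∈ Set.range (map cs.simple) :=
    Set.range_list_map cs.simple ▸ fun x hx => hC (hlC x hx)
  exact ⟨ω, fun i hi => hlC _ (mem_map_of_mem hi), rfl⟩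

theorem mem_parRefl_of_isReflection {C : Set W} (hC : C ⊆ simpleSet cs) {t : W}
    (ht : cs.IsReflection t) (htC : t ∈ par C) : t ∈ parRefl C := by
  obtain ⟨ω, hωC, rfl⟩ := exists_wordProd_eq_of_mem_par cs hC htC
  -- `t` is a left inversion of itself, so it occurs in the left inversion sequence of `ω`.
  have hself : π ω ∈ invSet cs (π ω) :=
    ⟨ht, by rw [ht.mul_self, length_one]; exact ht.odd_length.pos⟩
  obtain ⟨j, hj, hjt⟩ := mem_iff_getElem.mp
    (mem_leftInvSeq_of_invSign_wordProd cs ((mem_invSet_iff_invSign cs ht).mp hself))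
  rw [length_leftInvSeq] at hj
  rw [getElem_leftInvSeq cs ω j hj] at hjt
  exact ⟨_, wordProd_mem_par cs fun i hi => hωC i (mem_of_mem_take hi), _,
    hωC _ (getElem_mem hj), hjt.symm⟩

theorem invSet_mul_inter_parRefl_eq_empty {C D : Set W} (hD : D ⊆ simpleSet cs) {u v : W}
    (hu : invSet cs u ∩ parRefl C = ∅) (hv : invSet cs v ∩ parRefl D = ∅)
    (hCD : ∀ w ∈ par C, u⁻¹ * w * u ∈ par D) :
    invSet cs (u * v) ∩ parRefl C = ∅ := by
  refine Set.eq_empty_of_forall_notMem fun t ⟨htuv, htC⟩ => ?_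
  have htu : t ∉ invSet cs u := fun htu => hu.subset ⟨htu, htC⟩
  have hconj := inv_mul_mul_mem_invSet cs htuv htu
  exact hv.subset ⟨hconj, mem_parRefl_of_isReflection cs hD hconj.1
    (hCD t (parRefl_subset_par_s13 C htC))⟩

theorem inv_conj_mem_of_image_conj_eq {z : W} {H K : Set W}
    (h : (fun u => z * u * z⁻¹) '' H = K) {w : W} (hw : w ∈ K) : z⁻¹ * w * z ∈ H := by
  obtain ⟨v, hv, rfl⟩ := h ▸ hw
  simpa [mul_assoc] using hv

theorem relN_mul (Sg Sg' Sg'' : Set W)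
    (hSg' : Sg' ⊆ simpleSet cs)
    (y y' : W) (hy : y ∈ relN cs Sg Sg') (hy' : y' ∈ relN cs Sg' Sg'') :
    y' * y ∈ relN cs Sg Sg'' := by
  obtain ⟨hyR, hyL, hyC⟩ := hy
  obtain ⟨hy'R, hy'L, hy'C⟩ := hy'
  refine ⟨?_, ?_, ?_⟩
  · show invSet cs (y' * y)⁻¹ ∩ parRefl Sg = ∅
    rw [mul_inv_rev]
    refine invSet_mul_inter_parRefl_eq_empty cs hSg' hyR hy'R fun w hw => ?_
    rw [inv_inv, ← SetLike.mem_coe, ← hyC]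
    exact Set.mem_image_of_mem _ hw
  · exact invSet_mul_inter_parRefl_eq_empty cs hSg' hy'L hyL fun w hw =>
      inv_conj_mem_of_image_conj_eq hy'C hw
  · rw [← hy'C, ← hyC, Set.image_image]
    simp only [mul_inv_rev, mul_assoc]

end RelativeCoxeter
end
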